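/- arXiv:1701.03137 — 7 statements merged into one kernel-verified Lean document; each statement's English description precedes it below -/
import Mathlib

section
/- For the network SI system x'(t) = β(I - diag(x(t)))A x(t) with A nonnegative irreducible and β > 0, if x(0) ∈ [0,1]^n and x(0) ≠ 0, then x_i(t) > 0 for every node i and every t > 0. -/
/-!
Writing `S_i = ∑ j, A i j * x j`, the equation is `x_i' = β (1 - x_i) S_i`.
The box `[0,1]^n` is forward invariant: the energy `∑ i, (x_i⁻)²` of the negative parts obeys a
Grönwall inequality and starts at `0`, and once `x ≥ 0` the energy `((1 - x_i)⁻)²` is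
nonincreasing. Inside the box every `x_i` is nondecreasing. If `x_i(t) = 0` at some `t > 0`, then
`x_i` vanishes on `[0, t]`, so `S_i = 0` there; hence positivity spreads from `x_p` to `x_i`
whenever `A i p > 0`, and irreducibility carries it from a node with `x_j(0) > 0` to every node.
-/

/-- A nonnegative matrix is irreducible (its digraph is strongly connected). -/
def MatIrreducible {n : ℕ} (A : Matrix (Fin n) (Fin n) ℝ) : Prop :=
  ∀ i j : Fin n, ∃ k : ℕ, 0 < (A ^ k) i j

open Set Filter Topology

theorem hasDerivAt_negPart_sq (x : ℝ) : HasDerivAt (fun s : ℝ => s⁻ ^ 2) (-2 * x⁻) x := by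
  have off_zero : ∀ y : ℝ, y ≠ 0 → HasDerivAt (fun s : ℝ => s⁻ ^ 2) (-2 * y⁻) y := by
    intro y hy
    rcases hy.lt_or_gt with hy | hy
    · have h : (fun s : ℝ => s⁻ ^ 2) =ᶠ[𝓝 y] fun s => s ^ 2 := by
        filter_upwards [Iio_mem_nhds hy] with s hs
        simp [negPart_eq_neg.2 (mem_Iio.1 hs).le]
      rw [h.hasDerivAt_iff, negPart_eq_neg.2 hy.le]
      simpa using hasDerivAt_pow 2 y
    · have h : (fun s : ℝ => s⁻ ^ 2) =ᶠ[𝓝 y] fun _ => 0 := by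
        filter_upwards [Ioi_mem_nhds hy] with s hs
        simp [negPart_eq_zero.2 (mem_Ioi.1 hs).le]
      rw [h.hasDerivAt_iff, negPart_eq_zero.2 hy.le, mul_zero]
      exact hasDerivAt_const y 0
  exact hasDerivAt_of_hasDerivAt_of_ne' off_zero (by fun_prop) (by fun_prop) x

theorem negPart_mul_self (a : ℝ) : a⁻ * a = -a⁻ ^ 2 := by
  rcases le_total a 0 with h | h
  · rw [negPart_eq_neg.2 h]; ring
  · simp [negPart_eq_zero.2 h]

theorem le_zero_of_hasDerivAt_le_mul_self {f f' : ℝ → ℝ} {K a b : ℝ}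
    (hf : ∀ t ∈ Icc a b, HasDerivAt f (f' t) t) (ha : f a ≤ 0)
    (bound : ∀ t ∈ Ico a b, f' t ≤ K * f t) : ∀ t ∈ Icc a b, f t ≤ 0 := by
  intro t ht
  have h := le_gronwallBound_of_liminf_deriv_right_le (δ := 0) (ε := 0)
    (fun s hs => (hf s hs).continuousAt.continuousWithinAt)
    (fun s hs r hr => by
      simpa [slope_def_field, div_eq_inv_mul] using
        (hf s (Ico_subset_Icc_self hs)).hasDerivWithinAt.liminf_right_slope_le hr)
    ha (by simpa using bound) t ht
  rwa [gronwallBound_ε0_δ0] at h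

theorem mul_le_sum_sq {ι : Type*} [Fintype ι] (u : ι → ℝ) (i j : ι) :
    u i * u j ≤ ∑ k, u k ^ 2 := by
  have hi := Finset.single_le_sum (fun k _ => sq_nonneg (u k)) (Finset.mem_univ i)
  have hj := Finset.single_le_sum (fun k _ => sq_nonneg (u k)) (Finset.mem_univ j)
  nlinarith [two_mul_le_add_sq (u i) (u j)]

theorem Matrix.pow_apply_pos_induction {ι R : Type*} [Fintype ι] [DecidableEq ι] [Semiring R]
    [PartialOrder R] [IsOrderedRing R] [MulPosReflectLT R] [PosMulReflectLT R]
    {A : Matrix ι ι R} (hA : ∀ i j, 0 ≤ A i j) {P : ι → Prop}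
    (hP : ∀ i j, 0 < A i j → P j → P i) {k : ℕ} {i j : ι} (hk : 0 < (A ^ k) i j)
    (hj : P j) : P i := by
  induction k generalizing j with
  | zero =>
    obtain rfl : i = j := by
      by_contra h
      simp [Matrix.one_apply_ne h] at hk
    exact hj
  | succ k ih =>
    rw [pow_succ, Matrix.mul_apply, Finset.sum_pos_iff_of_nonneg
      fun l _ => mul_nonneg (Matrix.pow_apply_nonneg hA k i l) (hA l j)] at hk
    obtain ⟨l, -, hl⟩ := hk
    exact ih (pos_of_mul_pos_left hl (hA l j))
      (hP l j (pos_of_mul_pos_right hl (Matrix.pow_apply_nonneg hA k i l)) hj)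

section SIModel

variable {ι : Type*} [Fintype ι]

def siVectorField (β : ℝ) (A : Matrix ι ι ℝ) (v : ι → ℝ) (i : ι) : ℝ :=
  β * (1 - v i) * ∑ j, A i j * v j

def IsSISolution (β : ℝ) (A : Matrix ι ι ℝ) (x : ℝ → ι → ℝ) : Prop :=
  ∀ t, 0 ≤ t → ∀ i, HasDerivAt (fun s => x s i) (siVectorField β A (x t) i) t

theorem sum_negPart_mul_siVectorField_le {A : Matrix ι ι ℝ} (hA : ∀ i j, 0 ≤ A i j)
    {β M : ℝ} (hβ : 0 ≤ β) {v : ι → ℝ} (hv : ∀ i, (v i)⁻ ≤ M) :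
    ∑ i, -2 * (v i)⁻ * siVectorField β A v i ≤
      2 * β * (1 + M) * (∑ i, ∑ j, A i j) * ∑ i, (v i)⁻ ^ 2 := by
  have term_le : ∀ i, -2 * (v i)⁻ * siVectorField β A v i ≤
      ∑ j, 2 * β * (1 + M) * A i j * ∑ k, (v k)⁻ ^ 2 := by
    intro i
    have hM : 0 ≤ M := (negPart_nonneg _).trans (hv i)
    have hS : -∑ j, A i j * v j ≤ ∑ j, A i j * (v j)⁻ := by
      rw [← Finset.sum_neg_distrib]
      gcongr with j
      nlinarith [neg_le_negPart (v j), hA i j]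
    have hfac : (v i)⁻ * (1 - v i) = (v i)⁻ + (v i)⁻ ^ 2 := by
      rw [mul_sub, negPart_mul_self]; ring
    have hfac_nonneg : 0 ≤ (v i)⁻ * (1 - v i) := by rw [hfac]; positivity
    have hfac_le : (v i)⁻ * (1 - v i) ≤ (1 + M) * (v i)⁻ := by
      rw [hfac]; nlinarith [hv i, negPart_nonneg (v i)]
    calc -2 * (v i)⁻ * siVectorField β A v i
        = 2 * β * ((v i)⁻ * (1 - v i)) * -∑ j, A i j * v j := by rw [siVectorField]; ring
      _ ≤ 2 * β * ((v i)⁻ * (1 - v i)) * ∑ j, A i j * (v j)⁻ := by gcongr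
      _ ≤ 2 * β * ((1 + M) * (v i)⁻) * ∑ j, A i j * (v j)⁻ := by
          gcongr
          exact Finset.sum_nonneg fun j _ => mul_nonneg (hA i j) (negPart_nonneg _)
      _ = ∑ j, 2 * β * (1 + M) * A i j * ((v i)⁻ * (v j)⁻) := by
          rw [Finset.mul_sum]; congr 1 with j; ring
      _ ≤ ∑ j, 2 * β * (1 + M) * A i j * ∑ k, (v k)⁻ ^ 2 := by
          gcongr with j
          · exact mul_nonneg (by positivity) (hA i j)
          · exact mul_le_sum_sq (fun k => (v k)⁻) i j
  calc _ ≤ ∑ i, ∑ j, 2 * β * (1 + M) * A i j * ∑ k, (v k)⁻ ^ 2 :=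
        Finset.sum_le_sum fun i _ => term_le i
    _ = _ := by simp_rw [← Finset.sum_mul, ← Finset.mul_sum]

namespace IsSISolution

variable {β : ℝ} {A : Matrix ι ι ℝ} {x : ℝ → ι → ℝ}

theorem continuousAt (hx : IsSISolution β A x) {t : ℝ} (ht : 0 ≤ t) : ContinuousAt x t :=
  continuousAt_pi.2 fun i => (hx t ht i).continuousAt

theorem exists_negPart_le (hx : IsSISolution β A x) (T : ℝ) :
    ∃ M, ∀ t ∈ Icc 0 T, ∀ i, (x t i)⁻ ≤ M := by
  obtain ⟨C, hC⟩ := isCompact_Icc.exists_bound_of_continuousOn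
    fun t ht => (hx.continuousAt ht.1).continuousWithinAt
  refine ⟨C, fun t ht i => ?_⟩
  calc (x t i)⁻ ≤ ‖x t i‖ := max_le (neg_le_abs _) (abs_nonneg _)
    _ ≤ ‖x t‖ := norm_le_pi_norm (x t) i
    _ ≤ C := hC t ht

theorem nonneg (hx : IsSISolution β A x) (hA : ∀ i j, 0 ≤ A i j) (hβ : 0 ≤ β)
    (hx0 : ∀ i, 0 ≤ x 0 i) {t : ℝ} (ht : 0 ≤ t) (i : ι) : 0 ≤ x t i := by
  obtain ⟨M, hM⟩ := hx.exists_negPart_le t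
  have energy_le := le_zero_of_hasDerivAt_le_mul_self (f := fun s => ∑ i, (x s i)⁻ ^ 2)
    (fun s hs => HasDerivAt.fun_sum fun i _ => (hasDerivAt_negPart_sq _).comp s (hx s hs.1 i))
    (by simp [negPart_eq_zero.2 (hx0 _)])
    (fun s hs => sum_negPart_mul_siVectorField_le hA hβ (hM s (Ico_subset_Icc_self hs)))
    t ⟨ht, le_rfl⟩
  have hi : (x t i)⁻ ^ 2 ≤ 0 :=
    (Finset.single_le_sum (fun j _ => sq_nonneg (x t j)⁻) (Finset.mem_univ i)).trans energy_le
  exact negPart_eq_zero.1 (pow_eq_zero_iff two_ne_zero |>.1 (le_antisymm hi (sq_nonneg _)))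

theorem le_one (hx : IsSISolution β A x) (hA : ∀ i j, 0 ≤ A i j) (hβ : 0 ≤ β)
    (hx0 : ∀ i, x 0 i ∈ Icc 0 1) {t : ℝ} (ht : 0 ≤ t) (i : ι) : x t i ≤ 1 := by
  have energy_le := le_zero_of_hasDerivAt_le_mul_self (f := fun s => (1 - x s i)⁻ ^ 2) (K := 0)
    (fun s hs => (hasDerivAt_negPart_sq _).comp s ((hx s hs.1 i).const_sub 1))
    (by simp [negPart_eq_zero.2 (sub_nonneg.2 (hx0 i).2)])
    (fun s hs => by
      have hS : 0 ≤ ∑ j, A i j * x s j := Finset.sum_nonneg fun j _ =>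
        mul_nonneg (hA i j) (hx.nonneg hA hβ (fun k => (hx0 k).1) hs.1 j)
      calc -2 * (1 - x s i)⁻ * -siVectorField β A (x s) i
          = -(2 * β * (∑ j, A i j * x s j) * (1 - x s i)⁻ ^ 2) := by
            rw [siVectorField]
            linear_combination (2 * β * ∑ j, A i j * x s j) * negPart_mul_self (1 - x s i)
        _ ≤ 0 * (1 - x s i)⁻ ^ 2 := by
            rw [zero_mul, neg_nonpos]
            exact mul_nonneg (mul_nonneg (mul_nonneg zero_le_two hβ) hS) (sq_nonneg _))
    t ⟨ht, le_rfl⟩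
  have h := negPart_eq_zero.1
    (pow_eq_zero_iff two_ne_zero |>.1 (le_antisymm energy_le (sq_nonneg _)))
  linarith

theorem siVectorField_nonneg (hx : IsSISolution β A x) (hA : ∀ i j, 0 ≤ A i j) (hβ : 0 ≤ β)
    (hx0 : ∀ i, x 0 i ∈ Icc 0 1) {t : ℝ} (ht : 0 ≤ t) (i : ι) :
    0 ≤ siVectorField β A (x t) i :=
  mul_nonneg (mul_nonneg hβ (sub_nonneg.2 (hx.le_one hA hβ hx0 ht i)))
    (Finset.sum_nonneg fun j _ => mul_nonneg (hA i j) (hx.nonneg hA hβ (fun k => (hx0 k).1) ht j))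

theorem monotoneOn (hx : IsSISolution β A x) (hA : ∀ i j, 0 ≤ A i j) (hβ : 0 ≤ β)
    (hx0 : ∀ i, x 0 i ∈ Icc 0 1) (i : ι) : MonotoneOn (fun t => x t i) (Ici 0) := by
  refine monotoneOn_of_hasDerivWithinAt_nonneg (convex_Ici 0)
    (fun t ht => (hx t ht i).continuousAt.continuousWithinAt)
    (fun t ht => (hx t (interior_subset ht) i).hasDerivWithinAt) fun t ht => ?_
  exact hx.siVectorField_nonneg hA hβ hx0 (interior_subset ht : t ∈ Ici 0) i

theorem pos_of_pos_of_adj (hx : IsSISolution β A x) (hA : ∀ i j, 0 ≤ A i j) (hβ : 0 < β)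
    (hx0 : ∀ i, x 0 i ∈ Icc 0 1) {i p : ι} (hip : 0 < A i p)
    (hp : ∀ t, 0 < t → 0 < x t p) {t : ℝ} (ht : 0 < t) : 0 < x t i := by
  have x_nonneg := fun {s : ℝ} (hs : 0 ≤ s) j => hx.nonneg hA hβ.le (fun k => (hx0 k).1) hs j
  refine (x_nonneg ht.le i).lt_of_ne fun hxt => ?_
  have hu : t / 2 ∈ Ioo 0 t := ⟨by linarith, by linarith⟩
  have hzero : (fun s => x s i) =ᶠ[𝓝 (t / 2)] fun _ => 0 := by
    filter_upwards [Ioo_mem_nhds hu.1 hu.2] with s hs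
    exact le_antisymm (hxt ▸ hx.monotoneOn hA hβ.le hx0 i hs.1.le ht.le hs.2.le)
      (x_nonneg hs.1.le i)
  have hderiv_zero := (hx (t / 2) hu.1.le i).unique (hzero.hasDerivAt_iff.2 (hasDerivAt_const _ 0))
  have hS : 0 < ∑ j, A i j * x (t / 2) j :=
    (mul_pos hip (hp _ hu.1)).trans_le
      (Finset.single_le_sum (fun j _ => mul_nonneg (hA i j) (x_nonneg hu.1.le j))
        (Finset.mem_univ p))
  rw [siVectorField, hzero.eq_of_nhds, sub_zero, mul_one] at hderiv_zero
  exact (mul_pos hβ hS).ne' hderiv_zero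

theorem pos_of_pow_apply_pos [DecidableEq ι] (hx : IsSISolution β A x) (hA : ∀ i j, 0 ≤ A i j)
    (hβ : 0 < β) (hx0 : ∀ i, x 0 i ∈ Icc 0 1) {k : ℕ} {i j : ι} (hk : 0 < (A ^ k) i j)
    (hj : 0 < x 0 j) {t : ℝ} (ht : 0 < t) : 0 < x t i :=
  Matrix.pow_apply_pos_induction (P := fun l => ∀ t, 0 < t → 0 < x t l) hA
    (fun _ _ hip hp _ ht => hx.pos_of_pos_of_adj hA hβ hx0 hip hp ht) hk
    (fun _ ht => hj.trans_le (hx.monotoneOn hA hβ.le hx0 j self_mem_Ici ht.le ht.le)) t ht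

end IsSISolution

end SIModel

/-- For the network SI system x' = β(I - diag(x))Ax with A nonnegative
irreducible and β > 0, if x(0) ∈ [0,1]^n and x(0) ≠ 0, then x_i(t) > 0 for every
node i and every t > 0. -/
theorem network_SI_positivity
    {n : ℕ} (A : Matrix (Fin n) (Fin n) ℝ)
    (hA : ∀ i j, 0 ≤ A i j) (hirr : MatIrreducible A)
    (β : ℝ) (hβ : 0 < β)
    (x : ℝ → Fin n → ℝ)
    (hderiv : ∀ t : ℝ, 0 ≤ t → ∀ i,
      HasDerivAt (fun s => x s i) (β * (1 - x t i) * ∑ j, A i j * x t j) t)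
    (hx0 : ∀ i, x 0 i ∈ Set.Icc (0:ℝ) 1)
    (hx0ne : x 0 ≠ 0) :
    ∀ t : ℝ, 0 < t → ∀ i, 0 < x t i := by
  have hsol : IsSISolution β A x := hderiv
  obtain ⟨j, hj⟩ : ∃ j, 0 < x 0 j := by
    by_contra! h
    exact hx0ne (funext fun j => le_antisymm (h j) (hx0 j).1)
  intro t ht i
  obtain ⟨k, hk⟩ := hirr i j
  exact hsol.pos_of_pow_apply_pos hA hβ hx0 hk hj ht
end

section
/- Let A be an n×n nonnegative irreducible matrix with spectral radius λ_max and positive left Perron eigenvector v. If βλ_max < γ, then along any solution of the network SIS system x'(t) = β(I - diag(x(t)))Ax(t) - γx(t) with x(t) ∈ [0,1]^n, the function y(t) = v^⊤ x(t) satisfies y(t) ≤ y(0)e^{(βλ_max - γ)t} for all t ≥ 0; in particular y(t) → 0 exponentially. -/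
/-!
The weighted prevalence `y = vᵀx` satisfies the differential inequality `y' ≤ (βλ - γ) y`:
dropping the factor `1 - xᵢ ≤ 1` only increases the infection term (everything is nonnegative),
and `vᵀA = λvᵀ` turns `vᵀAx` into `λy`. Grönwall's inequality then gives the exponential bound.
-/

open Finset Matrix Real

theorem le_mul_exp_of_hasDerivAt_le_mul {f f' : ℝ → ℝ} {K : ℝ}
    (hf : ∀ t, 0 ≤ t → HasDerivAt f (f' t) t) (bound : ∀ t, 0 ≤ t → f' t ≤ K * f t)
    {t : ℝ} (ht : 0 ≤ t) : f t ≤ f 0 * exp (K * t) := by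
  have := le_gronwallBound_of_liminf_deriv_right_le (f := f) (f' := f') (δ := f 0) (ε := 0)
    (fun s hs => (hf s hs.1).continuousAt.continuousWithinAt)
    (fun s hs _ hr => (hf s hs.1).hasDerivWithinAt.liminf_right_slope_le hr)
    le_rfl (fun s hs => by simpa using bound s hs.1) t ⟨ht, le_rfl⟩
  simpa [gronwallBound_ε0] using this

section WeightedSum

variable {ι : Type*} [Fintype ι] {A : Matrix ι ι ℝ} {v : ι → ℝ} {lam : ℝ}

theorem sum_mul_sum_mul_eq_of_left_eigenvector (heig : ∀ j, ∑ i, v i * A i j = lam * v j)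
    (x : ι → ℝ) : ∑ i, v i * ∑ j, A i j * x j = lam * ∑ j, v j * x j := by
  have h := dotProduct_mulVec v A x
  simp only [dotProduct, mulVec, vecMul, heig] at h
  rw [h, mul_sum]
  exact sum_congr rfl fun j _ => mul_assoc _ _ _

theorem sum_mul_sis_field_le (hA : ∀ i j, 0 ≤ A i j) (hv : ∀ i, 0 ≤ v i)
    (heig : ∀ j, ∑ i, v i * A i j = lam * v j) {β : ℝ} (hβ : 0 ≤ β) (γ : ℝ)
    {x : ι → ℝ} (hx : ∀ i, 0 ≤ x i) :
    ∑ i, v i * (β * (1 - x i) * (∑ j, A i j * x j) - γ * x i)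
      ≤ (β * lam - γ) * ∑ i, v i * x i := by
  have hinfection : ∀ i, (1 - x i) * ∑ j, A i j * x j ≤ ∑ j, A i j * x j := fun i =>
    mul_le_of_le_one_left (sum_nonneg fun j _ => mul_nonneg (hA i j) (hx j))
      (sub_le_self 1 (hx i))
  calc ∑ i, v i * (β * (1 - x i) * (∑ j, A i j * x j) - γ * x i)
      ≤ ∑ i, v i * (β * (∑ j, A i j * x j) - γ * x i) := by
        refine sum_le_sum fun i _ => mul_le_mul_of_nonneg_left (sub_le_sub_right ?_ _) (hv i)
        rw [mul_assoc]
        exact mul_le_mul_of_nonneg_left (hinfection i) hβ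
    _ = β * ∑ i, v i * ∑ j, A i j * x j - γ * ∑ i, v i * x i := by
        rw [mul_sum _ _ β, mul_sum _ _ γ, ← sum_sub_distrib]
        exact sum_congr rfl fun i _ => by ring
    _ = (β * lam - γ) * ∑ i, v i * x i := by
        rw [sum_mul_sum_mul_eq_of_left_eigenvector heig]
        ring

end WeightedSum

theorem network_SIS_below_threshold_decay_general
    {n : ℕ} (A : Matrix (Fin n) (Fin n) ℝ)
    (hA : ∀ i j, 0 ≤ A i j)
    (β γ : ℝ) (hβ : 0 < β)
    (lam : ℝ) (v : Fin n → ℝ) (hv : ∀ i, 0 < v i)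
    (heig : ∀ j, ∑ i, v i * A i j = lam * v j)
    (x : ℝ → Fin n → ℝ)
    (hbox : ∀ t : ℝ, 0 ≤ t → ∀ i, x t i ∈ Set.Icc (0:ℝ) 1)
    (hderiv : ∀ t : ℝ, 0 ≤ t → ∀ i,
      HasDerivAt (fun s => x s i)
        (β * (1 - x t i) * (∑ j, A i j * x t j) - γ * x t i) t) :
    ∀ t : ℝ, 0 ≤ t →
      ∑ i, v i * x t i ≤ (∑ i, v i * x 0 i) * Real.exp ((β * lam - γ) * t) := fun _ ht =>
  le_mul_exp_of_hasDerivAt_le_mul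
    (fun s hs => HasDerivAt.fun_sum fun i _ => (hderiv s hs i).const_mul (v i))
    (fun s hs => sum_mul_sis_field_le hA (fun i => (hv i).le) heig hβ.le γ
      fun i => (hbox s hs i).1)
    ht

/-- If βλ_max < γ, then along any solution of the network SIS system
x' = β(I - diag(x))Ax - γx staying in [0,1]^n, the weighted average y(t) = vᵀx(t)
(v the positive left Perron eigenvector for λ_max) satisfies
y(t) ≤ y(0)·e^{(βλ_max - γ)t} for all t ≥ 0. -/
theorem network_SIS_below_threshold_decay
    {n : ℕ} (A : Matrix (Fin n) (Fin n) ℝ)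
    (hA : ∀ i j, 0 ≤ A i j) (hirr : MatIrreducible A)
    (β γ : ℝ) (hβ : 0 < β) (hγ : 0 < γ)
    (lam : ℝ) (v : Fin n → ℝ) (hv : ∀ i, 0 < v i)
    (heig : ∀ j, ∑ i, v i * A i j = lam * v j)
    (hthr : β * lam < γ)
    (x : ℝ → Fin n → ℝ)
    (hbox : ∀ t : ℝ, 0 ≤ t → ∀ i, x t i ∈ Set.Icc (0:ℝ) 1)
    (hderiv : ∀ t : ℝ, 0 ≤ t → ∀ i,
      HasDerivAt (fun s => x s i)
        (β * (1 - x t i) * (∑ j, A i j * x t j) - γ * x t i) t) :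
    ∀ t : ℝ, 0 ≤ t →
      ∑ i, v i * x t i ≤ (∑ i, v i * x 0 i) * Real.exp ((β * lam - γ) * t) :=
  network_SIS_below_threshold_decay_general A hA β γ hβ lam v hv heig x hbox hderiv
end

section
/- Define F(x)_i = f_+((β/γ)(Ax)_i) with f_+(y) = y/(1+y), where A is n×n nonnegative and β, γ > 0. If βρ(A)/γ < 1, then the only fixed point of F in [0,1]^n is 0. (Proof idea: F(x) ≤ (β/γ)Ax entrywise and monotonicity give F^k(x) ≤ ((β/γ)A)^k x → 0 by Schur stability.) -/
/-! A nonnegative fixed point `x` satisfies `x ≤ M *ᵥ x` for the nonnegative matrix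
`M = (β / γ) • A`, because `y / (1 + y) ≤ y` for `y ≥ 0`. Since `M` is monotone on vectors,
`x ≤ M ^ k *ᵥ x` for every `k`; and `ρ(M) = βρ(A)/γ < 1`, so by Gelfand's formula `M ^ k → 0`,
which forces `x ≤ 0`. -/

open scoped ENNReal

/-- The spectral radius of a real matrix: the spectral radius of its
complexification. -/
noncomputable def specRad {n : ℕ} (A : Matrix (Fin n) (Fin n) ℝ) : ℝ :=
  (spectralRadius ℂ (A.map (Complex.ofReal : ℝ → ℂ))).toReal

open Filter Topology Matrix

namespace spectrum

theorem spectralRadius_smul_of_ne_zero {𝕜 A : Type*} [NormedField 𝕜] [Ring A] [Algebra 𝕜 A]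
    {c : 𝕜} (hc : c ≠ 0) (a : A) :
    spectralRadius 𝕜 (c • a) = ‖c‖₊ * spectralRadius 𝕜 a := by
  have hσ : spectrum 𝕜 (c • a) = (c • ·) '' spectrum 𝕜 a := by
    rw [Set.image_smul, ← Units.smul_mk0 hc a, unit_smul_eq_smul]
    rfl
  simp only [spectralRadius, hσ, iSup_image, nnnorm_smul, ENNReal.coe_mul, ENNReal.mul_iSup]

variable {A : Type*} [NormedRing A] [NormedAlgebra ℂ A] [CompleteSpace A]

theorem spectralRadius_lt_top (a : A) : spectralRadius ℂ a < ⊤ :=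
  (spectralRadius_le_pow_nnnorm_pow_one_div ℂ a 0).trans_lt (by simp [ENNReal.mul_lt_top])

theorem tendsto_pow_nhds_zero_of_spectralRadius_lt_one {a : A} (ha : spectralRadius ℂ a < 1) :
    Tendsto (a ^ ·) atTop (𝓝 0) := by
  obtain ⟨r, hρr, hr1⟩ := ENNReal.lt_iff_exists_nnreal_btwn.mp ha
  have hbound : ∀ᶠ k : ℕ in atTop, ‖a ^ k‖ ≤ (r : ℝ) ^ k := by
    filter_upwards [(pow_norm_pow_one_div_tendsto_nhds_spectralRadius a).eventually_lt_const hρr,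
      eventually_gt_atTop 0] with k hk hk0
    have hk' : ‖a ^ k‖ ^ (k : ℝ)⁻¹ < r := by
      rwa [ENNReal.ofReal_lt_coe_iff (by positivity), one_div] at hk
    rw [Real.rpow_inv_lt_iff_of_pos (norm_nonneg (a ^ k)) r.coe_nonneg (by positivity),
      Real.rpow_natCast] at hk'
    exact hk'.le
  exact squeeze_zero_norm' hbound
    (tendsto_pow_atTop_nhds_zero_of_lt_one r.2 (by exact_mod_cast hr1))

end spectrum

namespace Matrix

variable {ι R : Type*} [Fintype ι] [Semiring R] [PartialOrder R] [IsOrderedRing R]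

theorem mulVec_mono_of_nonneg {M : Matrix ι ι R} (hM : ∀ i j, 0 ≤ M i j) {v w : ι → R}
    (hvw : v ≤ w) : M *ᵥ v ≤ M *ᵥ w := fun i =>
  Finset.sum_le_sum fun j _ => mul_le_mul_of_nonneg_left (hvw j) (hM i j)

theorem le_pow_mulVec_of_le_mulVec [DecidableEq ι] {M : Matrix ι ι R} (hM : ∀ i j, 0 ≤ M i j)
    {x : ι → R} (hx : x ≤ M *ᵥ x) (k : ℕ) : x ≤ (M ^ k) *ᵥ x := by
  induction k with
  | zero => rw [pow_zero, one_mulVec]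
  | succ k ih =>
    calc x ≤ M *ᵥ x := hx
      _ ≤ M *ᵥ ((M ^ k) *ᵥ x) := mulVec_mono_of_nonneg hM ih
      _ = (M ^ (k + 1)) *ᵥ x := by rw [mulVec_mulVec, pow_succ']

end Matrix

theorem specRad_smul {n : ℕ} {c : ℝ} (hc : c ≠ 0) (A : Matrix (Fin n) (Fin n) ℝ) :
    specRad (c • A) = |c| * specRad A := by
  have hmap : (c • A).map Complex.ofReal = (c : ℂ) • A.map Complex.ofReal :=
    Matrix.map_smul _ c (fun a => (Complex.ofReal_mul c a).trans (Complex.real_smul).symm) A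
  rw [specRad, specRad, hmap, spectrum.spectralRadius_smul_of_ne_zero (by exact_mod_cast hc),
    ENNReal.toReal_mul]
  simp

section

-- Only the induced topology matters; this norm makes square matrices a Banach algebra.
attribute [local instance] Matrix.linftyOpNormedRing Matrix.linftyOpNormedAlgebra

theorem tendsto_pow_nhds_zero_of_specRad_lt_one {n : ℕ} {M : Matrix (Fin n) (Fin n) ℝ}
    (hM : specRad M < 1) : Tendsto (M ^ ·) atTop (𝓝 0) := by
  set B := M.map Complex.ofReal
  have hB : spectralRadius ℂ B < 1 :=
    (ENNReal.toReal_lt_toReal (spectrum.spectralRadius_lt_top B).ne ENNReal.one_ne_top).mp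
      (by rwa [specRad] at hM)
  have hre : ∀ k, M ^ k = (B ^ k).map Complex.re := fun k => by
    have hpow : (M ^ k).map Complex.ofReal = B ^ k := Matrix.map_pow M Complex.ofRealHom k
    rw [← hpow]
    ext
    simp
  have hcont : Continuous fun N : Matrix (Fin n) (Fin n) ℂ => N.map Complex.re :=
    continuous_id.matrix_map Complex.continuous_re
  simpa [hre, Function.comp_def] using
    (hcont.tendsto 0).comp (spectrum.tendsto_pow_nhds_zero_of_spectralRadius_lt_one hB)

end

theorem eq_zero_of_le_mulVec_of_specRad_lt_one {n : ℕ} {M : Matrix (Fin n) (Fin n) ℝ}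
    (hM : ∀ i j, 0 ≤ M i j) (hρ : specRad M < 1) {x : Fin n → ℝ} (hx0 : 0 ≤ x)
    (hx : x ≤ M *ᵥ x) : x = 0 := by
  have hlim : Tendsto (fun k => (M ^ k) *ᵥ x) atTop (𝓝 0) := by
    simpa [Function.comp_def] using
      ((continuous_id.matrix_mulVec continuous_const).tendsto 0).comp
        (tendsto_pow_nhds_zero_of_specRad_lt_one hρ)
  exact le_antisymm (ge_of_tendsto' hlim (le_pow_mulVec_of_le_mulVec hM hx)) hx0

/-- Define F(x)_i = f₊((β/γ)(Ax)_i) with f₊(y) = y/(1+y), A n×n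
nonnegative, β, γ > 0. If βρ(A)/γ < 1, then the only fixed point of F in [0,1]^n
is 0. -/
theorem network_SIS_unique_fixed_point_below_threshold
    {n : ℕ} (A : Matrix (Fin n) (Fin n) ℝ)
    (hA : ∀ i j, 0 ≤ A i j)
    (β γ : ℝ) (hβ : 0 < β) (hγ : 0 < γ)
    (hthr : β * specRad A / γ < 1) :
    ∀ x : Fin n → ℝ, (∀ i, x i ∈ Set.Icc (0:ℝ) 1) →
      (∀ i, (β / γ * ∑ j, A i j * x j) / (1 + β / γ * ∑ j, A i j * x j) = x i) →
      x = 0 := by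
  intro x hx hfix
  have hc : 0 < β / γ := div_pos hβ hγ
  have hx0 : 0 ≤ x := fun i => (hx i).1
  refine eq_zero_of_le_mulVec_of_specRad_lt_one (M := (β / γ) • A)
    (fun i j => mul_nonneg hc.le (hA i j)) ?_ hx0 fun i => ?_
  · rwa [specRad_smul hc.ne', abs_of_pos hc, div_mul_eq_mul_div]
  · have hy : 0 ≤ β / γ * ∑ j, A i j * x j :=
      mul_nonneg hc.le (Finset.sum_nonneg fun j _ => mul_nonneg (hA i j) (hx0 j))
    calc x i = (β / γ * ∑ j, A i j * x j) / (1 + β / γ * ∑ j, A i j * x j) := (hfix i).symm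
      _ ≤ β / γ * ∑ j, A i j * x j := div_le_self hy (le_add_of_nonneg_right hy)
      _ = (((β / γ) • A) *ᵥ x) i := by rw [smul_mulVec]; rfl
end

section
/- Let A be nonnegative irreducible with Perron eigenvalue λ_max and right Perron eigenvector u ≫ 0, and suppose βλ_max/γ > 1. Define the iteration y(k+1) = F_+((β/γ)A y(k)) with f_+(z) = z/(1+z) applied entrywise. If y(0) is a positive scalar multiple of u with max_i y_i(0) ≤ 1 - γ/(βλ_max), then the sequence y(k) is entrywise monotonically non-decreasing, entrywise bounded above by 1, and converges to a limit x* ≫ 0 satisfying F_+((β/γ)Ax*) = x*. -/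
/-- Above the threshold (βλ_max/γ > 1), the iteration
y(k+1) = F₊((β/γ)A y(k)), started from a positive multiple of the right Perron
eigenvector u with max_i y_i(0) ≤ 1 - γ/(βλ_max), is entrywise non-decreasing,
entrywise bounded above by 1, and converges to a limit x* ≫ 0 that is a fixed
point of F₊((β/γ)A ·). -/
theorem network_SIS_iteration_above_threshold
    {n : ℕ} (A : Matrix (Fin n) (Fin n) ℝ)
    (hA : ∀ i j, 0 ≤ A i j) (hirr : MatIrreducible A)
    (β γ : ℝ) (hβ : 0 < β) (hγ : 0 < γ)
    (lam : ℝ) (u : Fin n → ℝ) (hu : ∀ i, 0 < u i)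
    (heig : ∀ i, ∑ j, A i j * u j = lam * u i)
    (hthr : 1 < β * lam / γ)
    (y : ℕ → Fin n → ℝ)
    (hy0 : ∃ c : ℝ, 0 < c ∧ y 0 = fun i => c * u i)
    (hmax : ∀ i, y 0 i ≤ 1 - γ / (β * lam))
    (hiter : ∀ k i, y (k + 1) i =
      (β / γ * ∑ j, A i j * y k j) / (1 + β / γ * ∑ j, A i j * y k j)) :
    (∀ k i, y k i ≤ y (k + 1) i) ∧
    (∀ k i, y k i ≤ 1) ∧
    (∃ xstar : Fin n → ℝ, (∀ i, 0 < xstar i) ∧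
      (∀ i, Filter.Tendsto (fun k => y k i) Filter.atTop (nhds (xstar i))) ∧
      (∀ i, (β / γ * ∑ j, A i j * xstar j) / (1 + β / γ * ∑ j, A i j * xstar j)
        = xstar i)) := by
  obtain ⟨c, hc, hy0e⟩ := hy0
  have hlam : 0 < lam := by
    by_contra h
    push_neg at h
    have : β * lam / γ ≤ 0 :=
      div_nonpos_of_nonpos_of_nonneg (mul_nonpos_of_nonneg_of_nonpos hβ.le h) hγ.le
    linarith
  have hbγ : 0 < β / γ := div_pos hβ hγ
  have hy0pos : ∀ i, 0 < y 0 i := by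
    intro i; rw [hy0e]; exact mul_pos hc (hu i)
  have hnn : ∀ k i, 0 ≤ y k i := by
    intro k
    induction k with
    | zero => exact fun i => (hy0pos i).le
    | succ k ih =>
      intro i
      rw [hiter]
      have hs : 0 ≤ β / γ * ∑ j, A i j * y k j :=
        mul_nonneg hbγ.le (Finset.sum_nonneg fun j _ => mul_nonneg (hA i j) (ih j))
      exact div_nonneg hs (by linarith)
  have hmono : ∀ k i, y k i ≤ y (k + 1) i := by
    intro k
    induction k with
    | zero =>
      intro i
      rw [hiter]
      have hsum : (∑ j, A i j * y 0 j) = c * (lam * u i) := by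
        rw [hy0e, ← heig i, Finset.mul_sum]
        apply Finset.sum_congr rfl
        intro j _; ring
      rw [hsum]
      have htpos : 0 < y 0 i := hy0pos i
      have hte : y 0 i = c * u i := by rw [hy0e]
      have hle : y 0 i ≤ 1 - γ / (β * lam) := hmax i
      have hrw : β / γ * (c * (lam * u i)) = (β * lam / γ) * y 0 i := by
        rw [hte]; ring
      rw [hrw]
      set t := y 0 i with ht
      set r := β * lam / γ with hr
      have hr1 : 1 < r := hthr
      have hrt : 0 < 1 + r * t := by nlinarith
      rw [le_div_iff₀ hrt]
      have hγβ : γ / (β * lam) = 1 / r := by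
        rw [hr]; field_simp
      rw [hγβ] at hle
      have hr0 : 0 < r := by linarith
      have h1r : 1 / r > 0 := by positivity
      have : t * r ≤ r - 1 := by
        have := mul_le_mul_of_nonneg_right hle hr0.le
        have hrr : (1 - 1 / r) * r = r - 1 := by field_simp
        linarith [hrr ▸ this]
      nlinarith
    | succ k ih =>
      intro i
      rw [hiter, hiter]
      have hsle : ∑ j, A i j * y k j ≤ ∑ j, A i j * y (k + 1) j :=
        Finset.sum_le_sum fun j _ => mul_le_mul_of_nonneg_left (ih j) (hA i j)
      have h0 : 0 ≤ β / γ * ∑ j, A i j * y k j :=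
        mul_nonneg hbγ.le (Finset.sum_nonneg fun j _ => mul_nonneg (hA i j) (hnn k j))
      have hab : β / γ * ∑ j, A i j * y k j ≤ β / γ * ∑ j, A i j * y (k + 1) j :=
        mul_le_mul_of_nonneg_left hsle hbγ.le
      set a := β / γ * ∑ j, A i j * y k j
      set b := β / γ * ∑ j, A i j * y (k + 1) j
      rw [div_le_div_iff₀ (by linarith) (by linarith)]
      nlinarith
  have hb1 : ∀ k i, y k i ≤ 1 := by
    intro k i
    cases k with
    | zero =>
      have h2 : 0 < γ / (β * lam) := div_pos hγ (mul_pos hβ hlam)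
      linarith [hmax i]
    | succ k =>
      rw [hiter]
      have hs : 0 ≤ β / γ * ∑ j, A i j * y k j :=
        mul_nonneg hbγ.le (Finset.sum_nonneg fun j _ => mul_nonneg (hA i j) (hnn k j))
      rw [div_le_one (by linarith)]
      linarith
  have hmono' : ∀ i, Monotone fun k => y k i :=
    fun i => monotone_nat_of_le_succ fun k => hmono k i
  have hbdd : ∀ i, BddAbove (Set.range fun k => y k i) := by
    intro i
    refine ⟨1, ?_⟩
    rintro x ⟨k, rfl⟩
    exact hb1 k i
  set xstar : Fin n → ℝ := fun i => ⨆ k, y k i with hx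
  have htend : ∀ i, Filter.Tendsto (fun k => y k i) Filter.atTop (nhds (xstar i)) :=
    fun i => tendsto_atTop_ciSup (hmono' i) (hbdd i)
  have hxpos : ∀ i, 0 < xstar i :=
    fun i => lt_of_lt_of_le (hy0pos i) (le_ciSup (hbdd i) 0)
  refine ⟨hmono, hb1, xstar, hxpos, htend, ?_⟩
  intro i
  have hSlim : Filter.Tendsto (fun k => β / γ * ∑ j, A i j * y k j) Filter.atTop
      (nhds (β / γ * ∑ j, A i j * xstar j)) := by
    apply Filter.Tendsto.const_mul
    exact tendsto_finset_sum _ fun j _ => (htend j).const_mul _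
  have hden : 0 < 1 + β / γ * ∑ j, A i j * xstar j := by
    have h0 : 0 ≤ β / γ * ∑ j, A i j * xstar j :=
      mul_nonneg hbγ.le (Finset.sum_nonneg fun j _ => mul_nonneg (hA i j) (hxpos j).le)
    linarith
  have h1 : Filter.Tendsto (fun k => y (k + 1) i) Filter.atTop
      (nhds ((β / γ * ∑ j, A i j * xstar j) / (1 + β / γ * ∑ j, A i j * xstar j))) := by
    simp only [hiter]
    exact hSlim.div (Filter.Tendsto.const_add 1 hSlim) hden.ne'
  have h2 : Filter.Tendsto (fun k => y (k + 1) i) Filter.atTop (nhds (xstar i)) :=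
    (htend i).comp (Filter.tendsto_add_atTop_nat 1)
  exact tendsto_nhds_unique h1 h2
end

section
/- Let A be nonnegative irreducible and β, γ > 0. The map F(x) = F_+((β/γ)Ax), with f_+(z) = z/(1+z) applied entrywise, has at most one fixed point x* with x* ≫ 0 in [0,1)^n. (Key step: if y* is another positive fixed point and α = min_j y*_j/x*_j ∈ (0,1) is attained at index i, then strict concavity of f_+ yields F(y*)_i > y*_i, a contradiction.) -/
private lemma sis_aux {n : ℕ} (A : Matrix (Fin n) (Fin n) ℝ)
    (hA : ∀ i j, 0 ≤ A i j) (c : ℝ) (hc : 0 < c) (hn : 0 < n)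
    (x y : Fin n → ℝ) (hx : ∀ i, 0 < x i ∧ x i < 1) (hy : ∀ i, 0 < y i)
    (hfx : ∀ i, (c * ∑ j, A i j * x j) / (1 + c * ∑ j, A i j * x j) = x i)
    (hfy : ∀ i, (c * ∑ j, A i j * y j) / (1 + c * ∑ j, A i j * y j) = y i) :
    ∀ i, x i ≤ y i := by
  haveI : Nonempty (Fin n) := ⟨⟨0, hn⟩⟩
  set α := Finset.univ.inf' Finset.univ_nonempty (fun j => y j / x j) with hα
  obtain ⟨i, -, hi⟩ := Finset.exists_mem_eq_inf' Finset.univ_nonempty (fun j => y j / x j)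
  have hαeq : α = y i / x i := hα.trans hi
  have hαle : ∀ j, α ≤ y j / x j := fun j => Finset.inf'_le _ (Finset.mem_univ j)
  have hαx : ∀ j, α * x j ≤ y j := fun j => (le_div_iff₀ (hx j).1).mp (hαle j)
  have hαpos : 0 < α := hαeq ▸ div_pos (hy i) (hx i).1
  have hyi : y i = α * x i := by
    have h2 := hαeq
    rw [eq_div_iff (hx i).1.ne'] at h2
    linarith
  have h1α : 1 ≤ α := by
    by_contra h
    push_neg at h
    set Sx := c * ∑ j, A i j * x j with hSx
    set Sy := c * ∑ j, A i j * y j with hSy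
    have hxi : Sx / (1 + Sx) = x i := hfx i
    have hyi2 : Sy / (1 + Sy) = y i := hfy i
    have hSx0 : 0 ≤ Sx := by
      apply mul_nonneg hc.le
      exact Finset.sum_nonneg fun j _ => mul_nonneg (hA i j) (hx j).1.le
    have hSy0 : 0 ≤ Sy := by
      apply mul_nonneg hc.le
      exact Finset.sum_nonneg fun j _ => mul_nonneg (hA i j) (hy j).le
    have hSyα : α * Sx ≤ Sy := by
      rw [hSx, hSy]
      have hswap : α * (c * ∑ j, A i j * x j) = c * ∑ j, A i j * (α * x j) := by
        rw [Finset.mul_sum, Finset.mul_sum, Finset.mul_sum]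
        exact Finset.sum_congr rfl fun j _ => by ring
      rw [hswap]
      apply mul_le_mul_of_nonneg_left _ hc.le
      exact Finset.sum_le_sum fun j _ => mul_le_mul_of_nonneg_left (hαx j) (hA i j)
    clear_value Sx Sy
    have hSxpos : 0 < Sx := by
      rcases hSx0.lt_or_eq with h' | h'
      · exact h'
      · rw [← h'] at hxi
        norm_num at hxi
        exact absurd hxi.symm (hx i).1.ne'
    have hden1 : (0:ℝ) < 1 + α * Sx := by positivity
    have hden2 : (0:ℝ) < 1 + Sy := by linarith
    have hden3 : (0:ℝ) < 1 + Sx := by linarith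
    have mono : (α * Sx) / (1 + α * Sx) ≤ Sy / (1 + Sy) := by
      rw [div_le_div_iff₀ hden1 hden2]; nlinarith
    have strict : α * (Sx / (1 + Sx)) < (α * Sx) / (1 + α * Sx) := by
      rw [← mul_div_assoc, div_lt_div_iff₀ hden3 hden1]
      have hp : 0 < α * Sx := mul_pos hαpos hSxpos
      have hlt : 1 + α * Sx < 1 + Sx := by nlinarith
      exact (mul_lt_mul_iff_right₀ hp).mpr hlt
    rw [hxi] at strict
    rw [hyi2, hyi] at mono
    linarith
  intro j
  nlinarith [hαx j, (hx j).1]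

/-- For A nonnegative irreducible and β, γ > 0, the map
F(x) = F₊((β/γ)Ax), f₊(z) = z/(1+z) entrywise, has at most one fixed point
x* ≫ 0 in [0,1)^n. -/
theorem network_SIS_positive_fixed_point_unique
    {n : ℕ} (A : Matrix (Fin n) (Fin n) ℝ)
    (hA : ∀ i j, 0 ≤ A i j) (hirr : MatIrreducible A)
    (β γ : ℝ) (hβ : 0 < β) (hγ : 0 < γ) :
    ∀ x y : Fin n → ℝ,
      (∀ i, 0 < x i ∧ x i < 1) → (∀ i, 0 < y i ∧ y i < 1) →
      (∀ i, (β / γ * ∑ j, A i j * x j) / (1 + β / γ * ∑ j, A i j * x j) = x i) →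
      (∀ i, (β / γ * ∑ j, A i j * y j) / (1 + β / γ * ∑ j, A i j * y j) = y i) →
      x = y := by
  intro x y hx hy hfx hfy
  rcases Nat.eq_zero_or_pos n with hn | hn
  · subst hn; funext i; exact i.elim0
  · have hc : 0 < β / γ := div_pos hβ hγ
    have h1 := sis_aux A hA (β/γ) hc hn x y hx (fun i => (hy i).1) hfx hfy
    have h2 := sis_aux A hA (β/γ) hc hn y x hy (fun i => (hx i).1) hfy hfx
    funext i
    exact le_antisymm (h1 i) (h2 i)
end

section
/- Along any solution (s(t), x(t), r(t)) of the network SIR system s' = -β diag(s)Ax, x' = β diag(s)Ax - γx, r' = γx, each function V_i(t) = s_i(t)·exp((β/γ)∑_j a_{ij} r_j(t)) is constant in t. -/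
/-! Since `r' = γ x`, the exponent `(β/γ) (A r)_i` has derivative `β (A x)_i`, which is exactly
the per-capita rate at which `s_i` decays; hence `s_i · exp ((β/γ) (A r)_i)` has derivative `0`. -/

open Real

theorem mul_exp_eq_of_hasDerivAt {f g h : ℝ → ℝ}
    (hf : ∀ t, HasDerivAt f (-(g t * f t)) t) (hh : ∀ t, HasDerivAt h (g t) t) (a b : ℝ) :
    f a * exp (h a) = f b * exp (h b) := by
  have hderiv : ∀ t, HasDerivAt (fun u => f u * exp (h u)) 0 t := fun t =>
    ((hf t).fun_mul (hh t).exp).congr_deriv (by ring)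
  exact is_const_of_deriv_eq_zero (fun t => (hderiv t).differentiableAt)
    (fun t => (hderiv t).deriv) a b

theorem network_SIR_conserved_quantities_general
    {n : ℕ} (A : Matrix (Fin n) (Fin n) ℝ)
    (β γ : ℝ) (hγ : 0 < γ)
    (s x r : ℝ → Fin n → ℝ)
    (hderivs : ∀ t : ℝ, ∀ i,
      HasDerivAt (fun u => s u i) (-(β * s t i * ∑ j, A i j * x t j)) t)
    (hderivr : ∀ t : ℝ, ∀ i, HasDerivAt (fun u => r u i) (γ * x t i) t) :
    ∀ i, ∀ t : ℝ,
      s t i * Real.exp (β / γ * ∑ j, A i j * r t j)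
        = s 0 i * Real.exp (β / γ * ∑ j, A i j * r 0 j) := by
  intro i t
  have hexponent : ∀ u, HasDerivAt (fun v => β / γ * ∑ j, A i j * r v j)
      (β * ∑ j, A i j * x u j) u := fun u => by
    have h := (HasDerivAt.fun_sum (u := Finset.univ)
      fun j _ => (hderivr u j).const_mul (A i j)).const_mul (β / γ)
    refine h.congr_deriv ?_
    simp_rw [mul_left_comm _ γ, ← Finset.mul_sum]
    field_simp
  exact mul_exp_eq_of_hasDerivAt
    (fun u => (hderivs u i).congr_deriv (by ring)) hexponent t 0

/-- Along any solution (s, x, r) of the network SIR system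
s' = -β diag(s)Ax, x' = β diag(s)Ax - γx, r' = γx, each function
V_i(t) = s_i(t)·exp((β/γ)∑_j a_{ij} r_j(t)) is constant in t. -/
theorem network_SIR_conserved_quantities
    {n : ℕ} (A : Matrix (Fin n) (Fin n) ℝ) (hA : ∀ i j, 0 ≤ A i j)
    (β γ : ℝ) (hβ : 0 < β) (hγ : 0 < γ)
    (s x r : ℝ → Fin n → ℝ)
    (hsum : ∀ t i, s t i + x t i + r t i = 1)
    (hderivs : ∀ t : ℝ, ∀ i,
      HasDerivAt (fun u => s u i) (-(β * s t i * ∑ j, A i j * x t j)) t)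
    (hderivx : ∀ t : ℝ, ∀ i,
      HasDerivAt (fun u => x u i)
        (β * s t i * (∑ j, A i j * x t j) - γ * x t i) t)
    (hderivr : ∀ t : ℝ, ∀ i, HasDerivAt (fun u => r u i) (γ * x t i) t) :
    ∀ i, ∀ t : ℝ,
      s t i * Real.exp (β / γ * ∑ j, A i j * r t j)
        = s 0 i * Real.exp (β / γ * ∑ j, A i j * r 0 j) :=
  network_SIR_conserved_quantities_general A β γ hγ s x r hderivs hderivr
end

section
/- Let A ∈ ℝ^{n×n}_{≥0}, β, γ > 0, and fix vectors s(0), r(0) ∈ [0,1]^n. Define H(s)_i = s_i(0)·exp((β/γ)∑_j a_{ij}(s_j - 1 + r_j(0))). Then H maps the order interval K = {s : 0 ≤ s ≤ 1_n - r(0)} into itself and is monotone: 0 ≤ p ≤ q ≤ 1_n - r(0) implies 0 ≤ H(p) ≤ H(q) ≤ 1_n - r(0). Consequently the sequences p(k+1) = H(p(k)) with p(0) = 0 and q(k+1) = H(q(k)) with q(0) = 1_n - r(0) are respectively non-decreasing and non-increasing and converge to fixed points p* ≤ q* of H. -/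
/-- The map H(s)_i = s_i(0)·exp((β/γ)∑_j a_{ij}(s_j - 1 + r_j(0)))
maps the order interval K = {s : 0 ≤ s ≤ 1 - r(0)} into itself, is monotone on K,
and the iterates from 0 (resp. from 1 - r(0)) are non-decreasing (resp.
non-increasing) and converge to fixed points p* ≤ q* of H. -/
theorem network_SIR_H_monotone_iterates
    {n : ℕ} (A : Matrix (Fin n) (Fin n) ℝ) (hA : ∀ i j, 0 ≤ A i j)
    (β γ : ℝ) (hβ : 0 < β) (hγ : 0 < γ)
    (s0 r0 : Fin n → ℝ)
    (hs0 : ∀ i, 0 ≤ s0 i) (hr0 : ∀ i, 0 ≤ r0 i ∧ r0 i ≤ 1)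
    (hs0le : ∀ i, s0 i ≤ 1 - r0 i)
    (H : (Fin n → ℝ) → (Fin n → ℝ))
    (hH : ∀ s i, H s i = s0 i * Real.exp (β / γ * ∑ j, A i j * (s j - 1 + r0 j)))
    (p q : ℕ → Fin n → ℝ)
    (hp0 : p 0 = 0) (hpiter : ∀ k, p (k + 1) = H (p k))
    (hq0 : q 0 = fun i => 1 - r0 i) (hqiter : ∀ k, q (k + 1) = H (q k)) :
    -- H maps K into itself
    (∀ s : Fin n → ℝ, (∀ i, 0 ≤ s i ∧ s i ≤ 1 - r0 i) →
      ∀ i, 0 ≤ H s i ∧ H s i ≤ 1 - r0 i) ∧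
    -- H is monotone on K
    (∀ u w : Fin n → ℝ, (∀ i, 0 ≤ u i) → (∀ i, u i ≤ w i) →
      (∀ i, w i ≤ 1 - r0 i) → ∀ i, H u i ≤ H w i) ∧
    -- p is non-decreasing, q is non-increasing
    (∀ k i, p k i ≤ p (k + 1) i) ∧
    (∀ k i, q (k + 1) i ≤ q k i) ∧
    -- they converge to fixed points p* ≤ q*
    (∃ pstar qstar : Fin n → ℝ,
      (∀ i, Filter.Tendsto (fun k => p k i) Filter.atTop (nhds (pstar i))) ∧
      (∀ i, Filter.Tendsto (fun k => q k i) Filter.atTop (nhds (qstar i))) ∧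
      H pstar = pstar ∧ H qstar = qstar ∧ ∀ i, pstar i ≤ qstar i) := by
  have hc : 0 < β / γ := div_pos hβ hγ
  -- H maps K into K
  have hmapK : ∀ s : Fin n → ℝ, (∀ i, 0 ≤ s i ∧ s i ≤ 1 - r0 i) →
      ∀ i, 0 ≤ H s i ∧ H s i ≤ 1 - r0 i := by
    intro s hs i
    rw [hH]
    constructor
    · exact mul_nonneg (hs0 i) (Real.exp_pos _).le
    · have hsum : ∑ j, A i j * (s j - 1 + r0 j) ≤ 0 := by
        apply Finset.sum_nonpos
        intro j _
        exact mul_nonpos_of_nonneg_of_nonpos (hA i j) (by linarith [(hs j).2])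
      have hexp : Real.exp (β / γ * ∑ j, A i j * (s j - 1 + r0 j)) ≤ 1 := by
        rw [Real.exp_le_one_iff]
        exact mul_nonpos_of_nonneg_of_nonpos hc.le hsum
      calc s0 i * Real.exp (β / γ * ∑ j, A i j * (s j - 1 + r0 j))
          ≤ s0 i * 1 := by
            exact mul_le_mul_of_nonneg_left hexp (hs0 i)
        _ ≤ 1 - r0 i := by rw [mul_one]; exact hs0le i
  -- monotonicity
  have hmono : ∀ u w : Fin n → ℝ, (∀ i, 0 ≤ u i) → (∀ i, u i ≤ w i) →
      (∀ i, w i ≤ 1 - r0 i) → ∀ i, H u i ≤ H w i := by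
    intro u w _ huw _ i
    rw [hH, hH]
    apply mul_le_mul_of_nonneg_left _ (hs0 i)
    apply Real.exp_le_exp.mpr
    apply mul_le_mul_of_nonneg_left _ hc.le
    apply Finset.sum_le_sum
    intro j _
    exact mul_le_mul_of_nonneg_left (by linarith [huw j]) (hA i j)
  -- p, q stay in K
  have hpK : ∀ k i, 0 ≤ p k i ∧ p k i ≤ 1 - r0 i := by
    intro k
    induction k with
    | zero => intro i; simp only [hp0, Pi.zero_apply]; exact ⟨le_refl 0, by linarith [(hr0 i).2]⟩
    | succ m ih => rw [hpiter]; exact hmapK _ ih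
  have hqK : ∀ k i, 0 ≤ q k i ∧ q k i ≤ 1 - r0 i := by
    intro k
    induction k with
    | zero => intro i; rw [hq0]; exact ⟨by simpa using (hr0 i).2, le_refl _⟩
    | succ m ih => rw [hqiter]; exact hmapK _ ih
  -- p nondecreasing
  have hpmono : ∀ k i, p k i ≤ p (k + 1) i := by
    intro k
    induction k with
    | zero => intro i; simp only [hp0, Pi.zero_apply]; exact (hpK 1 i).1
    | succ m ih =>
      rw [hpiter m, hpiter (m+1)]
      exact hmono _ _ (fun i => (hpK m i).1) ih (fun i => (hpK (m+1) i).2)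
  -- q nonincreasing
  have hqmono : ∀ k i, q (k + 1) i ≤ q k i := by
    intro k
    induction k with
    | zero => intro i; rw [hq0]; exact (hqK 1 i).2
    | succ m ih =>
      rw [hqiter m, hqiter (m+1)]
      exact hmono _ _ (fun i => (hqK (m+1) i).1) ih (fun i => (hqK m i).2)
  -- p ≤ q
  have hpq : ∀ k i, p k i ≤ q k i := by
    intro k
    induction k with
    | zero => intro i; simp only [hp0, hq0, Pi.zero_apply]; linarith [(hr0 i).2]
    | succ m ih =>
      rw [hpiter, hqiter]
      exact hmono _ _ (fun i => (hpK m i).1) ih (fun i => (hqK m i).2)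
  refine ⟨hmapK, hmono, hpmono, hqmono, ?_⟩
  -- continuity of H
  have hHeq : H = fun s i => s0 i * Real.exp (β / γ * ∑ j, A i j * (s j - 1 + r0 j)) := by
    funext s i; exact hH s i
  have hcont : Continuous H := by
    rw [hHeq]
    apply continuous_pi
    intro i
    apply Continuous.mul continuous_const
    apply Real.continuous_exp.comp
    apply Continuous.mul continuous_const
    apply continuous_finset_sum
    intro j _
    exact Continuous.mul continuous_const (by continuity)
  set pstar : Fin n → ℝ := fun i => ⨆ k, p k i with hpstar
  set qstar : Fin n → ℝ := fun i => ⨅ k, q k i with hqstar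
  have hpmono' : ∀ i, Monotone (fun k => p k i) := by
    intro i
    exact monotone_nat_of_le_succ (fun k => hpmono k i)
  have hqmono' : ∀ i, Antitone (fun k => q k i) := by
    intro i
    exact antitone_nat_of_succ_le (fun k => hqmono k i)
  have hptend : ∀ i, Filter.Tendsto (fun k => p k i) Filter.atTop (nhds (pstar i)) := by
    intro i
    exact tendsto_atTop_ciSup (hpmono' i) ⟨1 - r0 i, fun x ⟨k, hk⟩ => hk ▸ (hpK k i).2⟩
  have hqtend : ∀ i, Filter.Tendsto (fun k => q k i) Filter.atTop (nhds (qstar i)) := by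
    intro i
    exact tendsto_atTop_ciInf (hqmono' i) ⟨0, fun x ⟨k, hk⟩ => hk ▸ (hqK k i).1⟩
  have hptendPi : Filter.Tendsto p Filter.atTop (nhds pstar) :=
    tendsto_pi_nhds.mpr hptend
  have hqtendPi : Filter.Tendsto q Filter.atTop (nhds qstar) :=
    tendsto_pi_nhds.mpr hqtend
  have hpfix : H pstar = pstar := by
    have h1 : Filter.Tendsto (fun k => H (p k)) Filter.atTop (nhds (H pstar)) :=
      (hcont.tendsto pstar).comp hptendPi
    have h2 : Filter.Tendsto (fun k => p (k + 1)) Filter.atTop (nhds pstar) :=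
      hptendPi.comp (Filter.tendsto_add_atTop_nat 1)
    have h3 : (fun k => p (k + 1)) = fun k => H (p k) := funext hpiter
    rw [h3] at h2
    exact tendsto_nhds_unique h1 h2
  have hqfix : H qstar = qstar := by
    have h1 : Filter.Tendsto (fun k => H (q k)) Filter.atTop (nhds (H qstar)) :=
      (hcont.tendsto qstar).comp hqtendPi
    have h2 : Filter.Tendsto (fun k => q (k + 1)) Filter.atTop (nhds qstar) :=
      hqtendPi.comp (Filter.tendsto_add_atTop_nat 1)
    have h3 : (fun k => q (k + 1)) = fun k => H (q k) := funext hqiter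
    rw [h3] at h2
    exact tendsto_nhds_unique h1 h2
  refine ⟨pstar, qstar, hptend, hqtend, hpfix, hqfix, fun i => ?_⟩
  exact le_of_tendsto_of_tendsto' (hptend i) (hqtend i) (fun k => hpq k i)
end
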